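/- Let G be a connected stepwise irregular graph with n vertices and m edges. Then n − 1 ≤ m ≤ (n² − 1)/4. -/

import Mathlib

/-!
Every edge of a stepwise irregular graph joins a vertex of even degree to one of odd degree, so
the graph is bipartite with parts `s` (even degrees) and `t` (odd degrees), and
`4 m ≤ 4 |s| |t| ≤ n²`. The bound `4 m ≤ n² - 1` only fails if both inequalities are equalities;
but `m = |s| |t|` makes the graph complete bipartite, so every vertex of `s` has degree `|t|` and
every vertex of `t` degree `|s|`, and `|s| = |t|` then puts an edge between vertices of equal
degree. The lower bound `n - 1 ≤ m` holds for every connected graph.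
-/

open SimpleGraph

noncomputable def deg {V : Type*} (G : SimpleGraph V) (v : V) : ℕ := (G.neighborSet v).ncard

/-- A graph is stepwise irregular if for every edge the endpoint degrees differ by exactly 1. -/
def SI {V : Type*} (G : SimpleGraph V) : Prop :=
  ∀ u v, G.Adj u v → |(deg G u : ℤ) - (deg G v : ℤ)| = 1

open Finset

namespace SimpleGraph

variable {V : Type*} {G : SimpleGraph V}

theorem deg_eq_degree (v : V) [Fintype (G.neighborSet v)] : deg G v = G.degree v := by
  rw [deg, Set.ncard_eq_toFinset_card', ← card_neighborSet_eq_degree, Set.toFinset_card]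

variable [Fintype V] [DecidableRel G.Adj]

section Bipartite

variable {s t : Finset V}

theorem IsBipartiteWith.card_edgeFinset_le (h : G.IsBipartiteWith s t) :
    #G.edgeFinset ≤ #s * #t := by
  rw [← isBipartiteWith_sum_degrees_eq_card_edges h, ← smul_eq_mul, ← sum_const]
  exact sum_le_sum fun v hv ↦ isBipartiteWith_degree_le h hv

theorem IsBipartiteWith.degree_eq_card_of_card_edgeFinset_eq (h : G.IsBipartiteWith s t)
    (hm : #G.edgeFinset = #s * #t) {v : V} (hv : v ∈ s) : G.degree v = #t := by
  have hsum : ∑ u ∈ s, G.degree u = ∑ _u ∈ s, #t := by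
    rw [isBipartiteWith_sum_degrees_eq_card_edges h, hm, sum_const, smul_eq_mul]
  exact (sum_eq_sum_iff_of_le fun u hu ↦ isBipartiteWith_degree_le h hu).mp hsum v hv

theorem IsBipartiteWith.adj_of_card_edgeFinset_eq (h : G.IsBipartiteWith s t)
    (hm : #G.edgeFinset = #s * #t) {v w : V} (hv : v ∈ s) (hw : w ∈ t) : G.Adj v w := by
  have hN : G.neighborFinset v = t :=
    eq_of_subset_of_card_le (isBipartiteWith_neighborFinset_subset h hv)
      (by rw [card_neighborFinset_eq_degree, h.degree_eq_card_of_card_edgeFinset_eq hm hv])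
  rw [← mem_neighborFinset, hN]
  exact hw

theorem IsBipartiteWith.four_mul_card_edgeFinset_lt_sq (h : G.IsBipartiteWith s t)
    (hdeg : ∀ ⦃u v⦄, G.Adj u v → G.degree u ≠ G.degree v) (hst : 0 < #s + #t) :
    4 * #G.edgeFinset < (#s + #t) ^ 2 := by
  have hAMGM := four_mul_le_sq_add #s #t
  rcases h.card_edgeFinset_le.lt_or_eq with hlt | hm
  · nlinarith
  obtain hcard | hcard := eq_or_ne #s #t
  · obtain ⟨v, hv⟩ : s.Nonempty := card_pos.mp (by omega)
    obtain ⟨w, hw⟩ : t.Nonempty := card_pos.mp (by omega)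
    refine absurd ?_ (hdeg (h.adj_of_card_edgeFinset_eq hm hv hw))
    rw [h.degree_eq_card_of_card_edgeFinset_eq hm hv,
      h.symm.degree_eq_card_of_card_edgeFinset_eq (by rw [hm, mul_comm]) hw, hcard]
  · have : (0 : ℤ) < ((#s : ℤ) - #t) ^ 2 := by
      have : (#s : ℤ) - #t ≠ 0 := sub_ne_zero.mpr (by exact_mod_cast hcard)
      positivity
    zify at hm ⊢
    nlinarith

end Bipartite

theorem SI.even_degree_iff (hSI : SI G) {u v : V} (h : G.Adj u v) :
    Even (G.degree u) ↔ ¬Even (G.degree v) := by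
  have hdiff := hSI u v h
  rw [deg_eq_degree, deg_eq_degree, abs_eq zero_le_one] at hdiff
  have : G.degree u = G.degree v + 1 ∨ G.degree v = G.degree u + 1 := by omega
  rcases this with h' | h' <;> rw [h'] <;> simp [Nat.even_add_one]

theorem SI.degree_ne (hSI : SI G) {u v : V} (h : G.Adj u v) : G.degree u ≠ G.degree v :=
  fun heq ↦ iff_not_self (heq ▸ hSI.even_degree_iff h)

theorem SI.isBipartiteWith (hSI : SI G) :
    G.IsBipartiteWith ↑({v | Even (G.degree v)} : Finset V) ↑({v | ¬Even (G.degree v)} : Finset V)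
    where
  disjoint := by
    rw [disjoint_coe]
    exact disjoint_filter_filter_not _ _ _
  mem_of_adj u v h := by
    simp only [coe_filter, mem_univ, true_and, Set.mem_ofPred_eq]
    have := hSI.even_degree_iff h
    tauto

end SimpleGraph

theorem stmt_17 {V : Type*} [Fintype V] (G : SimpleGraph V) (hSI : SI G)
    (hconn : G.Connected) :
    (Fintype.card V : ℤ) - 1 ≤ (G.edgeSet.ncard : ℤ) ∧
    4 * (G.edgeSet.ncard : ℤ) ≤ (Fintype.card V : ℤ) ^ 2 - 1 := by
  classical
  have hm : G.edgeSet.ncard = #G.edgeFinset := by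
    rw [← Nat.card_coe_set_eq, Nat.card_eq_fintype_card, edgeFinset_card]
  have hlower := hconn.card_vert_le_card_edgeSet_add_one
  rw [Nat.card_eq_fintype_card, Nat.card_coe_set_eq] at hlower
  have hparts : #{v | Even (G.degree v)} + #{v | ¬Even (G.degree v)} = Fintype.card V :=
    card_filter_add_card_filter_not _
  have hupper := hSI.isBipartiteWith.four_mul_card_edgeFinset_lt_sq (fun _ _ ↦ hSI.degree_ne)
    (hparts ▸ Fintype.card_pos_iff.mpr hconn.nonempty)
  rw [hparts, ← hm] at hupper
  zify at hlower hupper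
  omega
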